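/- arXiv:1411.3429 — 5 statements merged into one kernel-verified Lean document; each statement's English description precedes it below -/
import Mathlib

section
/- Let M be a v×v matrix over ℂ with eigenvalue structure: eigenvalue τ₁ with multiplicity 1, τ₂ with multiplicity m₂, τ₃ with multiplicity m₃, where 1 + m₂ + m₃ = v, and let P be a permutation matrix of prime order p commuting with M, diagonalizable simultaneously with M, such that the all-ones vector is an eigenvector of both P (eigenvalue 1) and M (eigenvalue τ₁). If a₁ denotes the number of common eigenvectors in a common eigenbasis with P-eigenvalue 1 and M-eigenvalue τ₂, and a_p the number with P-eigenvalue a fixed primitive p-th root of unity and M-eigenvalue τ₂ (independent of the choice of primitive root when the τᵢ are distinct rationals), then trace(PM) = τ₁ + (a₁ - a_p)τ₂ + (b₁ - b_p)τ₃ where b₁, b_p are the analogous counts for τ₃. -/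
/-!
In a common eigenbasis, `trace (P * M) = ∑ i, μP i * μM i`; group the terms by the value of `μM`.
The `τ₁` group is the single vector with `μP = 1`. In the `τ₂` group every `μP i` is a `p`-th
root of unity, hence `1` or a primitive root because `p` is prime; every primitive root occurs
`a_p` times and the primitive `p`-th roots sum to `-1`, so the group contributes `(a₁ - a_p) τ₂`.
The `τ₃` group is the same.
-/

open Matrix Polynomial Finset

namespace IsPrimitiveRoot

variable {R : Type*} [CommRing R] [IsDomain R] {ζ : R} {n : ℕ}

theorem sum_nthRootsFinset_one (hζ : IsPrimitiveRoot ζ n) (hn : 1 < n) :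
    ∑ ξ ∈ nthRootsFinset n (1 : R), ξ = 0 := by
  classical
  rw [nthRootsFinset_def, sum_eq_multiset_sum, Multiset.toFinset_val,
    hζ.nthRoots_one_nodup.dedup, hζ.nthRoots_eq (one_pow n), Multiset.map_id']
  simpa [sum_eq_multiset_sum] using hζ.geom_sum_eq_zero hn

theorem sum_primitiveRoots_of_prime (hζ : IsPrimitiveRoot ζ n) (hn : n.Prime) :
    ∑ ξ ∈ primitiveRoots n R, ξ = -1 := by
  classical
  have hdisj : Disjoint (primitiveRoots n R) {1} := by
    simp [mem_primitiveRoots hn.pos, hn.ne_one]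
  have h := hζ.sum_nthRootsFinset_one hn.one_lt
  rw [nthRootsFinset_eq_of_prime hn, sum_union hdisj, sum_singleton] at h
  exact eq_neg_of_add_eq_zero_left h

theorem sum_eq_card_sub_of_card_fiber_eq {ι : Type*} [DecidableEq R] {p : ℕ}
    (hζ : IsPrimitiveRoot ζ p) (hp : p.Prime) {s : Finset ι} {f : ι → R}
    (hf : ∀ i ∈ s, f i ^ p = 1) {c : ℕ}
    (hc : ∀ ξ, IsPrimitiveRoot ξ p → #{i ∈ s | f i = ξ} = c) :
    ∑ i ∈ s, f i = #{i ∈ s | f i = 1} - c := by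
  have hmaps : ∀ i ∈ s, f i ∈ nthRootsFinset p (1 : R) := fun i hi =>
    (Polynomial.mem_nthRootsFinset hp.pos 1).2 (hf i hi)
  have hdisj : Disjoint (primitiveRoots p R) {1} := by
    simp [mem_primitiveRoots hp.pos, hp.ne_one]
  calc ∑ i ∈ s, f i = ∑ ξ ∈ nthRootsFinset p (1 : R), ∑ i ∈ s with f i = ξ, f i :=
        (sum_fiberwise_of_maps_to hmaps f).symm
    _ = ∑ ξ ∈ nthRootsFinset p (1 : R), #{i ∈ s | f i = ξ} • ξ := by
        refine sum_congr rfl fun ξ _ => ?_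
        rw [sum_congr rfl fun i hi => (mem_filter.1 hi).2, sum_const]
    _ = ∑ ξ ∈ primitiveRoots p R, c • ξ + #{i ∈ s | f i = 1} • 1 := by
        rw [nthRootsFinset_eq_of_prime hp, sum_union hdisj, sum_singleton]
        congr 1
        exact sum_congr rfl fun ξ hξ => by rw [hc ξ ((mem_primitiveRoots hp.pos).1 hξ)]
    _ = #{i ∈ s | f i = 1} - c := by
        rw [← smul_sum, hζ.sum_primitiveRoots_of_prime hp]
        simp only [nsmul_eq_mul, mul_neg, mul_one]
        ring

end IsPrimitiveRoot

theorem Matrix.pow_mulVec_eq_pow_smul {n R : Type*} [Fintype n] [DecidableEq n] [CommRing R]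
    {A : Matrix n n R} {x : n → R} {c : R} (h : A *ᵥ x = c • x) (k : ℕ) :
    (A ^ k) *ᵥ x = c ^ k • x := by
  induction k with
  | zero => simp
  | succ k ih => rw [pow_succ, ← mulVec_mulVec, h, mulVec_smul, ih, smul_smul, pow_succ']

theorem Matrix.pow_eq_one_of_mulVec_eq_smul {n K : Type*} [Fintype n] [DecidableEq n] [Field K]
    {A : Matrix n n K} {k : ℕ} (hA : A ^ k = 1) {x : n → K} (hx : x ≠ 0) {c : K}
    (h : A *ᵥ x = c • x) : c ^ k = 1 := by
  have hfix : c ^ k • x = (1 : K) • x := by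
    rw [← pow_mulVec_eq_pow_smul h, hA, one_mulVec, one_smul]
  exact smul_left_injective K hx hfix

theorem Matrix.trace_eq_sum_of_mulVec_basis_eq_smul {n ι R : Type*} [Fintype n] [DecidableEq n]
    [Fintype ι] [DecidableEq ι] [CommRing R] (b : Module.Basis ι R (n → R)) {A : Matrix n n R}
    {c : ι → R} (h : ∀ i, A *ᵥ b i = c i • b i) : A.trace = ∑ i, c i := by
  rw [← LinearMap.toMatrix'_toLin' A, ← LinearMap.toMatrix_eq_toMatrix',
    ← LinearMap.trace_eq_matrix_trace, LinearMap.trace_eq_matrix_trace R b]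
  refine sum_congr rfl fun i _ => ?_
  simp [LinearMap.toMatrix_apply, h]

theorem Finset.sum_mul_eq_of_forall_eq_or_eq_or_eq {ι R : Type*} [CommRing R] [DecidableEq R]
    {s : Finset ι} {f g : ι → R} {x y z : R} (hxy : x ≠ y) (hxz : x ≠ z) (hyz : y ≠ z)
    (hf : ∀ i ∈ s, f i = x ∨ f i = y ∨ f i = z) :
    ∑ i ∈ s, g i * f i = (∑ i ∈ s with f i = x, g i) * x + (∑ i ∈ s with f i = y, g i) * y
      + (∑ i ∈ s with f i = z, g i) * z := by
  have hmaps : ∀ i ∈ s, f i ∈ ({x, y, z} : Finset R) := by simpa using hf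
  have hfiber (t : R) : ∑ i ∈ s with f i = t, g i * f i = (∑ i ∈ s with f i = t, g i) * t := by
    rw [sum_mul]
    exact sum_congr rfl fun i hi => by rw [(mem_filter.1 hi).2]
  rw [← sum_fiberwise_of_maps_to hmaps, sum_insert (by simp [hxy, hxz]),
    sum_insert (by simp [hyz]), sum_singleton, hfiber, hfiber, hfiber, add_assoc]

theorem stmt6_general (v p : ℕ) (hp : p.Prime)
    (P M : Matrix (Fin v) (Fin v) ℂ)
    (hPp : P ^ p = 1)
    (τ₁ τ₂ τ₃ : ℚ)
    (hτ12 : τ₁ ≠ τ₂) (hτ13 : τ₁ ≠ τ₃) (hτ23 : τ₂ ≠ τ₃)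
    (b : Module.Basis (Fin v) ℂ (Fin v → ℂ))
    (μP μM : Fin v → ℂ)
    (hbP : ∀ i, P.mulVec (b i) = μP i • b i)
    (hbM : ∀ i, M.mulVec (b i) = μM i • b i)
    (hμM : ∀ i, μM i = (τ₁ : ℂ) ∨ μM i = (τ₂ : ℂ) ∨ μM i = (τ₃ : ℂ))
    (i₀ : Fin v) (hi₀M : μM i₀ = (τ₁ : ℂ)) (hi₀P : μP i₀ = 1)
    (huniq : ∀ i, μM i = (τ₁ : ℂ) → i = i₀)
    (a₁ ap b₁ bp : ℕ)
    (ha₁ : a₁ = {i : Fin v | μP i = 1 ∧ μM i = (τ₂ : ℂ)}.ncard)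
    (hap : ∀ ξ : ℂ, IsPrimitiveRoot ξ p →
      ap = {i : Fin v | μP i = ξ ∧ μM i = (τ₂ : ℂ)}.ncard)
    (hb₁ : b₁ = {i : Fin v | μP i = 1 ∧ μM i = (τ₃ : ℂ)}.ncard)
    (hbp : ∀ ξ : ℂ, IsPrimitiveRoot ξ p →
      bp = {i : Fin v | μP i = ξ ∧ μM i = (τ₃ : ℂ)}.ncard) :
    (P * M).trace = (τ₁ : ℂ) + ((a₁ : ℂ) - ap) * (τ₂ : ℂ)
      + ((b₁ : ℂ) - bp) * (τ₃ : ℂ) := by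
  have hroot (i : Fin v) : μP i ^ p = 1 := pow_eq_one_of_mulVec_eq_smul hPp (b.ne_zero i) (hbP i)
  have hcount (ξ τ : ℂ) :
      {i | μP i = ξ ∧ μM i = τ}.ncard = #{i ∈ {i | μM i = τ} | μP i = ξ} := by
    rw [← Set.ncard_coe_finset]
    congr 1
    ext i
    simp [and_comm]
  have hsum (τ : ℂ) (n₁ n : ℕ) (hn₁ : n₁ = {i | μP i = 1 ∧ μM i = τ}.ncard)
      (hn : ∀ ξ, IsPrimitiveRoot ξ p → n = {i | μP i = ξ ∧ μM i = τ}.ncard) :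
      ∑ i with μM i = τ, μP i = n₁ - n := by
    rw [hn₁, hcount]
    exact (Complex.isPrimitiveRoot_exp p hp.ne_zero).sum_eq_card_sub_of_card_fiber_eq hp
      (fun i _ => hroot i) fun ξ hξ => by rw [hn ξ hξ, hcount]
  have hsum₁ : ∑ i with μM i = τ₁, μP i = 1 := by
    rw [show ({i | μM i = τ₁} : Finset (Fin v)) = {i₀} by
      ext i; simpa using ⟨huniq i, fun h => h ▸ hi₀M⟩, sum_singleton, hi₀P]
  have hPM (i : Fin v) : (P * M) *ᵥ b i = (μP i * μM i) • b i := by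
    rw [← mulVec_mulVec, hbM, mulVec_smul, hbP, smul_smul, mul_comm]
  rw [trace_eq_sum_of_mulVec_basis_eq_smul b hPM,
    sum_mul_eq_of_forall_eq_or_eq_or_eq (by exact_mod_cast hτ12) (by exact_mod_cast hτ13)
      (by exact_mod_cast hτ23) fun i _ => hμM i,
    hsum₁, hsum τ₂ a₁ ap ha₁ hap, hsum τ₃ b₁ bp hb₁ hbp, one_mul]

/-- Trace of `P·M` for a prime-order permutation matrix `P` simultaneously
diagonalized with `M` (three distinct rational eigenvalues `τ₁, τ₂, τ₃`):
`trace(PM) = τ₁ + (a₁ - a_p)τ₂ + (b₁ - b_p)τ₃`. -/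
theorem stmt6 (v p : ℕ) (hp : p.Prime)
    (P M : Matrix (Fin v) (Fin v) ℂ)
    (hperm : ∃ σ : Equiv.Perm (Fin v), ∀ i j, P i j = if σ j = i then 1 else 0)
    (hPp : P ^ p = 1) (hcomm : P * M = M * P)
    (τ₁ τ₂ τ₃ : ℚ)
    (hτ12 : τ₁ ≠ τ₂) (hτ13 : τ₁ ≠ τ₃) (hτ23 : τ₂ ≠ τ₃)
    (b : Module.Basis (Fin v) ℂ (Fin v → ℂ))
    (μP μM : Fin v → ℂ)
    (hbP : ∀ i, P.mulVec (b i) = μP i • b i)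
    (hbM : ∀ i, M.mulVec (b i) = μM i • b i)
    (hμM : ∀ i, μM i = (τ₁ : ℂ) ∨ μM i = (τ₂ : ℂ) ∨ μM i = (τ₃ : ℂ))
    (i₀ : Fin v) (hi₀M : μM i₀ = (τ₁ : ℂ)) (hi₀P : μP i₀ = 1)
    (huniq : ∀ i, μM i = (τ₁ : ℂ) → i = i₀)
    (a₁ ap b₁ bp : ℕ)
    (ha₁ : a₁ = {i : Fin v | μP i = 1 ∧ μM i = (τ₂ : ℂ)}.ncard)
    (hap : ∀ ξ : ℂ, IsPrimitiveRoot ξ p →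
      ap = {i : Fin v | μP i = ξ ∧ μM i = (τ₂ : ℂ)}.ncard)
    (hb₁ : b₁ = {i : Fin v | μP i = 1 ∧ μM i = (τ₃ : ℂ)}.ncard)
    (hbp : ∀ ξ : ℂ, IsPrimitiveRoot ξ p →
      bp = {i : Fin v | μP i = ξ ∧ μM i = (τ₃ : ℂ)}.ncard) :
    (P * M).trace = (τ₁ : ℂ) + ((a₁ : ℂ) - ap) * (τ₂ : ℂ)
      + ((b₁ : ℂ) - bp) * (τ₃ : ℂ) :=
  stmt6_general v p hp P M hPp τ₁ τ₂ τ₃ hτ12 hτ13 hτ23 b μP μM hbP hbM hμM i₀ hi₀M hi₀P huniq a₁ ap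
    b₁ bp ha₁ hap hb₁ hbp
end

section
/- There is no regular (100, 33, 8, 12) partial difference set in the abelian group ℤ₄ × ℤ₅ × ℤ₅ all of whose elements have order 20 except for a single element of order 2. More precisely: if D ⊆ ℤ₄ × ℤ₅ × ℤ₅ consists of the unique element of order 2 together with 32 elements of order 20, then no element of order 4 can be written as a difference d₁ - d₂ with d₁, d₂ ∈ D, so D is not a (100,33,8,12) partial difference set (since μ = 12 > 0 requires every non-identity element outside D to be so representable). -/
/-!
Multiplication by 4 kills the element `e` of order 2 and every element of order 4, but no
element of order 20; multiplication by 10 sends every element of order 20 to the unique element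
of order 2, but is nonzero on elements of order 4. So a difference `d₁ - d₂` of order 4 would
force `d₁, d₂` to be both `e` (difference 0) or both of order 20 (difference killed by 10).
-/

open Finset

section OrderFourDifferences

variable {G : Type*} [AddCommGroup G]

lemma addOrderOf_nsmul_ten_of_addOrderOf_eq_twenty {d : G} (hd : addOrderOf d = 20) :
    addOrderOf ((10 : ℕ) • d) = 2 := by
  rw [addOrderOf_nsmul' _ (by norm_num : (10 : ℕ) ≠ 0), hd]
  norm_num

lemma nsmul_four_ne_zero_of_addOrderOf_eq_twenty {d : G} (hd : addOrderOf d = 20) :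
    (4 : ℕ) • d ≠ 0 := by
  intro h
  have := addOrderOf_dvd_of_nsmul_eq_zero h
  rw [hd] at this
  norm_num at this

lemma addOrderOf_sub_ne_four_of_addOrderOf_eq_twenty {e : G}
    (huniq : ∀ y : G, addOrderOf y = 2 → y = e) {d₁ d₂ : G}
    (h₁ : addOrderOf d₁ = 20) (h₂ : addOrderOf d₂ = 20) : addOrderOf (d₁ - d₂) ≠ 4 := by
  intro hx
  have hten : (10 : ℕ) • (d₁ - d₂) = 0 := by
    rw [nsmul_sub, huniq _ (addOrderOf_nsmul_ten_of_addOrderOf_eq_twenty h₁),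
      huniq _ (addOrderOf_nsmul_ten_of_addOrderOf_eq_twenty h₂), sub_self]
  have : addOrderOf ((10 : ℕ) • (d₁ - d₂)) = 2 := by
    rw [addOrderOf_nsmul' _ (by norm_num : (10 : ℕ) ≠ 0), hx]
    norm_num
  rw [hten, addOrderOf_zero] at this
  exact absurd this (by norm_num)

lemma addOrderOf_sub_ne_four_of_addOrderOf_eq_two {e d : G} (he : addOrderOf e = 2)
    (hd : addOrderOf d = 20) : addOrderOf (e - d) ≠ 4 := by
  intro hx
  have h4e : (4 : ℕ) • e = 0 := addOrderOf_dvd_iff_nsmul_eq_zero.mp (by rw [he]; norm_num)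
  have h4x : (4 : ℕ) • (e - d) = 0 := by rw [← hx]; exact addOrderOf_nsmul_eq_zero _
  rw [nsmul_sub, h4e, zero_sub, neg_eq_zero] at h4x
  exact nsmul_four_ne_zero_of_addOrderOf_eq_twenty hd h4x

theorem addOrderOf_sub_ne_four {e : G} (he : addOrderOf e = 2)
    (huniq : ∀ y : G, addOrderOf y = 2 → y = e) {d₁ d₂ : G}
    (h₁ : d₁ = e ∨ addOrderOf d₁ = 20) (h₂ : d₂ = e ∨ addOrderOf d₂ = 20) :
    addOrderOf (d₁ - d₂) ≠ 4 := by
  rcases h₁ with rfl | h₁ <;> rcases h₂ with rfl | h₂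
  · simp
  · exact addOrderOf_sub_ne_four_of_addOrderOf_eq_two he h₂
  · rw [← neg_sub, addOrderOf_neg]
    exact addOrderOf_sub_ne_four_of_addOrderOf_eq_two he h₁
  · exact addOrderOf_sub_ne_four_of_addOrderOf_eq_twenty huniq h₁ h₂

end OrderFourDifferences

section Z4Z5Z5

local notation "G" => ZMod 4 × ZMod 5 × ZMod 5

lemma addOrderOf_two_zero_zero : addOrderOf ((2, 0, 0) : G) = 2 :=
  addOrderOf_eq_prime (by decide) (by decide)

lemma addOrderOf_one_zero_zero : addOrderOf ((1, 0, 0) : G) = 4 :=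
  addOrderOf_eq_prime_pow (p := 2) (n := 1) (by decide) (by decide)

lemma eq_two_zero_zero_of_addOrderOf_eq_two {y : G} (hy : addOrderOf y = 2) :
    y = (2, 0, 0) := by
  have key : ∀ y : G, y + y = 0 → y = 0 ∨ y = (2, 0, 0) := by decide
  have h2 : y + y = 0 := by rw [← two_nsmul, ← hy]; exact addOrderOf_nsmul_eq_zero y
  refine (key y h2).resolve_left ?_
  rintro rfl
  simp at hy

end Z4Z5Z5

theorem stmt9_general (D : Finset (ZMod 4 × ZMod 5 × ZMod 5))
    (h20 : ∀ d ∈ D, d ≠ ((2 : ZMod 4), (0 : ZMod 5), (0 : ZMod 5)) →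
      addOrderOf d = 20) :
    (∀ x : ZMod 4 × ZMod 5 × ZMod 5, addOrderOf x = 4 →
      ¬ ∃ d₁ ∈ D, ∃ d₂ ∈ D, d₁ - d₂ = x) ∧
    ¬ (∀ x : ZMod 4 × ZMod 5 × ZMod 5, x ≠ 0 → x ∉ D →
        ((D ×ˢ D).filter fun p => p.1 - p.2 = x).card = 12) := by
  have hD : ∀ d ∈ D, d = (2, 0, 0) ∨ addOrderOf d = 20 := fun d hd =>
    or_iff_not_imp_left.mpr (h20 d hd)
  have hnot : ∀ x : ZMod 4 × ZMod 5 × ZMod 5, addOrderOf x = 4 →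
      ¬ ∃ d₁ ∈ D, ∃ d₂ ∈ D, d₁ - d₂ = x := by
    rintro x hx ⟨d₁, hd₁, d₂, hd₂, rfl⟩
    exact addOrderOf_sub_ne_four addOrderOf_two_zero_zero
      (fun _ => eq_two_zero_zero_of_addOrderOf_eq_two) (hD d₁ hd₁) (hD d₂ hd₂) hx
  refine ⟨hnot, fun hpds => ?_⟩
  have hx : ((1, 0, 0) : ZMod 4 × ZMod 5 × ZMod 5) ∉ D := fun hmem => by
    have := h20 _ hmem (by decide)
    rw [addOrderOf_one_zero_zero] at this
    exact absurd this (by norm_num)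
  obtain ⟨⟨d₁, d₂⟩, hp⟩ : (D ×ˢ D |>.filter fun p => p.1 - p.2 = (1, 0, 0)).Nonempty := by
    rw [← card_pos, hpds _ (by decide) hx]
    norm_num
  rw [mem_filter, mem_product] at hp
  exact hnot _ addOrderOf_one_zero_zero ⟨d₁, hp.1.1, d₂, hp.1.2, hp.2⟩

/-- In `ℤ₄ × ℤ₅ × ℤ₅`, a 33-set `D` consisting of the unique element of order 2
together with 32 elements of order 20 cannot represent any element of order 4 as a
difference of its elements, hence is not a `(100,33,8,12)` partial difference set. -/
theorem stmt9 (D : Finset (ZMod 4 × ZMod 5 × ZMod 5))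
    (hmem : ((2 : ZMod 4), (0 : ZMod 5), (0 : ZMod 5)) ∈ D)
    (hcard : D.card = 33)
    (h20 : ∀ d ∈ D, d ≠ ((2 : ZMod 4), (0 : ZMod 5), (0 : ZMod 5)) →
      addOrderOf d = 20) :
    (∀ x : ZMod 4 × ZMod 5 × ZMod 5, addOrderOf x = 4 →
      ¬ ∃ d₁ ∈ D, ∃ d₂ ∈ D, d₁ - d₂ = x) ∧
    ¬ (∀ x : ZMod 4 × ZMod 5 × ZMod 5, x ≠ 0 → x ∉ D →
        ((D ×ˢ D).filter fun p => p.1 - p.2 = x).card = 12) :=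
  stmt9_general D h20
end

section
/- Let G = ℤ₂ × ℤ₂ × ℤ₅ × ℤ₅ and let D ⊆ G be a subset closed under multiplication by every integer s coprime to 100 (i.e., d ∈ D implies s·d ∈ D), not containing the identity, with all elements of D of order 5 or 10. Then for any element ι of order 2 in G, the number of ordered pairs (α, β) ∈ D × D with α - β = ι is divisible by 8. Consequently D cannot be a (100, 36, 14, 12) partial difference set (as μ = 12 is not divisible by 8). -/
/-!
The argument works in any `ZMod 10`-module `A`. The group `(ZMod 10)ˣ × ℤˣ` of order 8 acts on
ordered pairs: a unit `u` multiplies both entries, and `-1` swaps them. Since odd multipliers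
fix `ι` and `-ι = ι`, the set of pairs in `D × D` with difference `ι` is invariant. The action
is free on it: a unit `u ≠ 1` can only fix an element `x` with `2 • x = 0`, while a swap
`(u • y, u • x) = (x, y)` forces `ι = (u - 1) • y ∈ 2 • A`, which together with `2 • ι = 0`
gives `ι = 0`. So 8 divides the count, and `μ = 12` is impossible.
-/

open Finset

theorem MulAction.nat_card_dvd_card_of_free {G X : Type*} [Group G] [MulAction G X]
    (S : Finset X) (hS : ∀ g : G, ∀ x ∈ S, g • x ∈ S)
    (hfree : ∀ g : G, ∀ x ∈ S, g • x = x → g = 1) : Nat.card G ∣ #S := by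
  let T : SubMulAction G X := ⟨S, fun g _ hx => hS g _ hx⟩
  have hstab : ∀ x : T, stabilizer G x = ⊥ := fun x =>
    (Subgroup.eq_bot_iff_forall _).2 fun g hg => hfree g x x.2 (congrArg Subtype.val hg)
  rw [← Nat.card_eq_finsetCard]
  change Nat.card G ∣ Nat.card T
  rw [Nat.card_congr (selfEquivOrbitsQuotientProd hstab), Nat.card_prod]
  exact dvd_mul_left _ _

section SwapAction

variable {M α : Type*} [Monoid M] [MulAction M α]

instance : SMul (M × ℤˣ) (α × α) :=
  ⟨fun g p => if g.2 = 1 then g.1 • p else g.1 • p.swap⟩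

theorem Prod.mk_one_smul (m : M) (p : α × α) : ((m, 1) : M × ℤˣ) • p = m • p := if_pos rfl

theorem Prod.mk_neg_one_smul (m : M) (p : α × α) : ((m, -1) : M × ℤˣ) • p = m • p.swap :=
  if_neg (by decide : (-1 : ℤˣ) ≠ 1)

instance : MulAction (M × ℤˣ) (α × α) where
  one_smul p := by rw [Prod.one_eq_mk, Prod.mk_one_smul, one_smul]
  mul_smul := by
    rintro ⟨m, ε⟩ ⟨n, δ⟩ p
    rcases Int.units_eq_one_or ε with rfl | rfl <;> rcases Int.units_eq_one_or δ with rfl | rfl <;>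
      simp [Prod.mk_one_smul, Prod.mk_neg_one_smul, mul_smul, Prod.smul_swap]

end SwapAction

theorem ZMod.units_ten_exists_eq_one_add_two_mul :
    ∀ u : (ZMod 10)ˣ, ∃ c : ZMod 10, (u : ZMod 10) = 1 + 2 * c := by
  decide

theorem ZMod.units_ten_eq_one_or_exists_mul_sub_one_eq_two :
    ∀ u : (ZMod 10)ˣ, u = 1 ∨ ∃ c : ZMod 10, c * ((u : ZMod 10) - 1) = 2 := by
  decide

theorem units_smul_eq_val_zsmul {n : ℕ} [NeZero n] {M : Type*} [AddCommGroup M]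
    [Module (ZMod n) M] (u : (ZMod n)ˣ) (x : M) : u • x = ((u : ZMod n).val : ℤ) • x := by
  rw [Units.smul_def, natCast_zsmul, ← Nat.cast_smul_eq_nsmul (ZMod n), ZMod.natCast_zmod_val]

section ExponentTen

variable {A : Type*} [AddCommGroup A] [Module (ZMod 10) A]

theorem one_add_two_mul_smul_of_two_nsmul_eq_zero {x : A} (hx : 2 • x = 0) (c : ZMod 10) :
    (1 + 2 * c) • x = x := by
  rw [add_smul, one_smul, mul_comm, mul_smul, ofNat_smul_eq_nsmul, hx, smul_zero, add_zero]

theorem units_smul_eq_self_of_two_nsmul_eq_zero {x : A} (hx : 2 • x = 0) (u : (ZMod 10)ˣ) :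
    u • x = x := by
  obtain ⟨c, hc⟩ := ZMod.units_ten_exists_eq_one_add_two_mul u
  rw [Units.smul_def, hc, one_add_two_mul_smul_of_two_nsmul_eq_zero hx]

theorem eq_one_of_units_smul_eq_self {x : A} (hx : 2 • x ≠ 0) {u : (ZMod 10)ˣ}
    (hu : u • x = x) : u = 1 := by
  refine (ZMod.units_ten_eq_one_or_exists_mul_sub_one_eq_two u).resolve_right ?_
  rintro ⟨c, hc⟩
  apply hx
  rw [← ofNat_smul_eq_nsmul (ZMod 10), ← hc, mul_smul, sub_smul, one_smul, ← Units.smul_def, hu,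
    sub_self, smul_zero]

theorem units_smul_sub_self_eq_zero {y : A} (u : (ZMod 10)ˣ) (h : 2 • (u • y - y) = 0) :
    u • y - y = 0 := by
  obtain ⟨c, hc⟩ := ZMod.units_ten_exists_eq_one_add_two_mul u
  have hsub : u • y - y = (2 * c) • y := by
    rw [Units.smul_def, hc, add_smul, one_smul, add_sub_cancel_left]
  rw [hsub] at h ⊢
  rw [← one_add_two_mul_smul_of_two_nsmul_eq_zero h 2, smul_smul, ← mul_assoc,
    show (1 + 2 * 2 : ZMod 10) * 2 = 0 from rfl, zero_mul, zero_smul]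

theorem smul_mem_filter_sub_eq [DecidableEq A] {D : Finset A}
    (hD : ∀ u : (ZMod 10)ˣ, ∀ x ∈ D, u • x ∈ D) {ι : A} (hι : 2 • ι = 0)
    (g : (ZMod 10)ˣ × ℤˣ) {p : A × A} (hp : p ∈ {p ∈ D ×ˢ D | p.1 - p.2 = ι}) :
    g • p ∈ {p ∈ D ×ˢ D | p.1 - p.2 = ι} := by
  obtain ⟨u, ε⟩ := g
  obtain ⟨x, y⟩ := p
  simp only [mem_filter, mem_product] at hp ⊢
  obtain ⟨⟨hx, hy⟩, rfl⟩ := hp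
  rcases Int.units_eq_one_or ε with rfl | rfl
  · rw [Prod.mk_one_smul, Prod.smul_mk, ← smul_sub, units_smul_eq_self_of_two_nsmul_eq_zero hι]
    exact ⟨⟨hD u x hx, hD u y hy⟩, rfl⟩
  · have hneg : -(x - y) = x - y := neg_eq_of_add_eq_zero_left (by rwa [← two_nsmul])
    rw [Prod.mk_neg_one_smul, Prod.swap_prod_mk, Prod.smul_mk, ← smul_sub, ← neg_sub, hneg,
      units_smul_eq_self_of_two_nsmul_eq_zero hι]
    exact ⟨⟨hD u y hy, hD u x hx⟩, rfl⟩

theorem eq_one_of_smul_eq_self_of_mem_filter_sub_eq [DecidableEq A] {D : Finset A}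
    (hD2 : ∀ x ∈ D, 2 • x ≠ 0) {ι : A} (hι : 2 • ι = 0) (hι0 : ι ≠ 0)
    (g : (ZMod 10)ˣ × ℤˣ) {p : A × A} (hp : p ∈ {p ∈ D ×ˢ D | p.1 - p.2 = ι})
    (hfix : g • p = p) : g = 1 := by
  obtain ⟨u, ε⟩ := g
  obtain ⟨x, y⟩ := p
  simp only [mem_filter, mem_product] at hp
  obtain ⟨⟨hx, -⟩, rfl⟩ := hp
  rcases Int.units_eq_one_or ε with rfl | rfl
  · rw [Prod.mk_one_smul, Prod.smul_mk, Prod.mk.injEq] at hfix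
    rw [eq_one_of_units_smul_eq_self (hD2 x hx) hfix.1]
    rfl
  · rw [Prod.mk_neg_one_smul, Prod.swap_prod_mk, Prod.smul_mk, Prod.mk.injEq] at hfix
    rw [← hfix.1] at hι hι0
    exact absurd (units_smul_sub_self_eq_zero u hι) hι0

theorem eight_dvd_card_filter_sub_eq [DecidableEq A] (D : Finset A)
    (hD : ∀ u : (ZMod 10)ˣ, ∀ x ∈ D, u • x ∈ D) (hD2 : ∀ x ∈ D, 2 • x ≠ 0) {ι : A}
    (hι : 2 • ι = 0) (hι0 : ι ≠ 0) : 8 ∣ #{p ∈ D ×ˢ D | p.1 - p.2 = ι} := by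
  have hcard : Nat.card ((ZMod 10)ˣ × ℤˣ) = 8 := by
    rw [Nat.card_prod, Nat.card_eq_fintype_card, Nat.card_eq_fintype_card,
      ZMod.card_units_eq_totient, Fintype.card_units_int]
    decide
  rw [← hcard]
  exact MulAction.nat_card_dvd_card_of_free _ (fun g _ => smul_mem_filter_sub_eq hD hι g)
    (fun g _ => eq_one_of_smul_eq_self_of_mem_filter_sub_eq hD2 hι hι0 g)

end ExponentTen

theorem stmt10_general (D : Finset (ZMod 2 × ZMod 2 × ZMod 5 × ZMod 5))
    (hclosed : ∀ s : ℤ, IsCoprime s 100 → ∀ d ∈ D, s • d ∈ D)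
    (hord : ∀ d ∈ D, addOrderOf d = 5 ∨ addOrderOf d = 10) :
    (∀ ι : ZMod 2 × ZMod 2 × ZMod 5 × ZMod 5, addOrderOf ι = 2 →
      8 ∣ ((D ×ˢ D).filter fun p => p.1 - p.2 = ι).card) ∧
    ¬ (∀ x : ZMod 2 × ZMod 2 × ZMod 5 × ZMod 5, x ≠ 0 → x ∉ D →
        ((D ×ˢ D).filter fun p => p.1 - p.2 = x).card = 12) := by
  let : Module (ZMod 10) (ZMod 2 × ZMod 2 × ZMod 5 × ZMod 5) :=
    AddCommGroup.zmodModule fun x => by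
      simp only [nsmul_eq_mul, Prod.ext_iff]
      refine ⟨?_, ?_, ?_, ?_⟩ <;> exact mul_eq_zero_of_left (by decide) _
  have hunits : ∀ u : (ZMod 10)ˣ, ∀ d ∈ D, u • d ∈ D := fun u d hd => by
    rw [units_smul_eq_val_zsmul]
    exact hclosed _ (Nat.isCoprime_iff_coprime.2 ((ZMod.val_coe_unit_coprime u).pow_right 2)) d hd
  have hD2 : ∀ d ∈ D, 2 • d ≠ 0 := fun d hd h => by
    have := Nat.le_of_dvd two_pos (addOrderOf_dvd_of_nsmul_eq_zero h)
    rcases hord d hd with h' | h' <;> omega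
  have key : ∀ ι : ZMod 2 × ZMod 2 × ZMod 5 × ZMod 5, addOrderOf ι = 2 →
      8 ∣ ((D ×ˢ D).filter fun p => p.1 - p.2 = ι).card := fun ι hι =>
    eight_dvd_card_filter_sub_eq D hunits hD2 (addOrderOf_dvd_iff_nsmul_eq_zero.1 hι.dvd)
      (by rintro rfl; simp at hι)
  refine ⟨key, fun hpds => ?_⟩
  have hι : addOrderOf ((1, 0, 0, 0) : ZMod 2 × ZMod 2 × ZMod 5 × ZMod 5) = 2 :=
    addOrderOf_eq_prime (by decide) (by decide)
  have hιD : ((1, 0, 0, 0) : ZMod 2 × ZMod 2 × ZMod 5 × ZMod 5) ∉ D := fun h => by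
    rcases hord _ h with h' | h' <;> omega
  have h8 := key _ hι
  rw [hpds _ (by decide) hιD] at h8
  omega

/-- In `ℤ₂ × ℤ₂ × ℤ₅ × ℤ₅`, if `D` is closed under multiplication by integers coprime
to 100, avoids the identity, and all its elements have order 5 or 10, then every
element of order 2 is represented as a difference of elements of `D` a number of times
divisible by 8; hence `D` is not a `(100,36,14,12)` partial difference set. -/
theorem stmt10 (D : Finset (ZMod 2 × ZMod 2 × ZMod 5 × ZMod 5))
    (hclosed : ∀ s : ℤ, IsCoprime s 100 → ∀ d ∈ D, s • d ∈ D)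
    (h0 : (0 : ZMod 2 × ZMod 2 × ZMod 5 × ZMod 5) ∉ D)
    (hord : ∀ d ∈ D, addOrderOf d = 5 ∨ addOrderOf d = 10) :
    (∀ ι : ZMod 2 × ZMod 2 × ZMod 5 × ZMod 5, addOrderOf ι = 2 →
      8 ∣ ((D ×ˢ D).filter fun p => p.1 - p.2 = ι).card) ∧
    ¬ (∀ x : ZMod 2 × ZMod 2 × ZMod 5 × ZMod 5, x ≠ 0 → x ∉ D →
        ((D ×ˢ D).filter fun p => p.1 - p.2 = x).card = 12) :=
  stmt10_general D hclosed hord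
end

section
/- Let A be the adjacency matrix of a strongly regular graph srg(v,k,λ,μ) with λ ≠ μ and Δ = (λ-μ)² + 4(k-μ). If 2k + (v-1)(λ-μ) ≠ 0, then the non-trivial eigenvalue multiplicities m₂ = (1/2)(v - 1 - (2k+(v-1)(λ-μ))/√Δ) and m₃ = (1/2)(v - 1 + (2k+(v-1)(λ-μ))/√Δ) are positive integers, and hence √Δ is rational, so Δ is a perfect square and the eigenvalues ν₂ = (λ-μ+√Δ)/2 and ν₃ = (λ-μ-√Δ)/2 are integers. -/
/-!
On the orthogonal complement of the all-ones vector `𝟙`, the adjacency matrix satisfies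
`x² - (λ - μ)x - (k - μ) = 0`. With the centering projection `P = I - J / v`, the matrices
`(A - ν₃)P / (ν₂ - ν₃)` and `(A - ν₂)P / (ν₃ - ν₂)` are therefore idempotent, so their traces are
ranks: natural numbers `m₂, m₃`, and evaluating the traces gives the stated formulas. Neither rank
vanishes, since otherwise `A` would be a combination of `I` and `J`, i.e. complete or empty.
Then `(v - 1 - 2m₂)√Δ = 2k + (v - 1)(λ - μ) ≠ 0` makes `√Δ` rational, hence an integer, and
`Δ ≡ (λ - μ)² mod 4` gives the parity needed for `ν₂, ν₃`.
-/

open Matrix Finset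

theorem isIdempotentElem_smul_sub_mul {K R : Type*} [Field K] [Ring R] [Algebra K R] {b p : R}
    {x y : K} (hp : IsIdempotentElem p) (hbp : Commute b p) (hxy : x ≠ y)
    (h : (b - algebraMap K R x) * (b - algebraMap K R y) * p = 0) :
    IsIdempotentElem ((x - y)⁻¹ • ((b - algebraMap K R y) * p)) := by
  have hcomm : Commute (b - algebraMap K R y) p :=
    hbp.sub_left (Algebra.commute_algebraMap_left y p)
  have key : (b - algebraMap K R y) * p * ((b - algebraMap K R y) * p)
      = (x - y) • ((b - algebraMap K R y) * p) := by
    calc _ = (b - algebraMap K R y) * (b - algebraMap K R y) * p := by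
          rw [mul_assoc, ← mul_assoc p, ← hcomm.eq, mul_assoc, hp.eq, ← mul_assoc]
      _ = (b - algebraMap K R x) * (b - algebraMap K R y) * p
          + (x - y) • ((b - algebraMap K R y) * p) := by
          rw [Algebra.smul_def, map_sub]; noncomm_ring
      _ = _ := by rw [h, zero_add]
  rw [IsIdempotentElem, smul_mul_smul_comm, key, smul_smul, mul_assoc,
    inv_mul_cancel₀ (sub_ne_zero.2 hxy), mul_one]

namespace Matrix

section Semiring

variable {n R : Type*} [Fintype n] [Semiring R]

theorem mul_of_one_eq_smul {B : Matrix n n R} {k : R} (hB : ∀ i, ∑ j, B i j = k) :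
    B * of 1 = k • of 1 := by
  ext i j
  simp [mul_apply, hB i]

theorem of_one_mul_eq_smul {B : Matrix n n R} {k : R} (hB : ∀ j, ∑ i, B i j = k) :
    of 1 * B = k • of 1 := by
  ext i j
  simp [mul_apply, hB j]

theorem of_one_mul_of_one : (of 1 : Matrix n n R) * of 1 = (Fintype.card n : R) • of 1 :=
  mul_of_one_eq_smul fun _ => by simp

end Semiring

section Field

variable {m n K : Type*} [Fintype n] [DecidableEq n] [Field K]

theorem rank_eq_zero_iff {A : Matrix m n K} : A.rank = 0 ↔ A = 0 := by
  rw [rank, Submodule.finrank_eq_zero, LinearMap.range_eq_bot, ← toLin'_apply',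
    LinearEquiv.map_eq_zero_iff]

theorem IsIdempotentElem.trace_eq_rank {E : Matrix n n K} (hE : IsIdempotentElem E) :
    E.trace = E.rank := by
  have hlin : IsIdempotentElem (toLin' E) := by
    rw [IsIdempotentElem, Module.End.mul_eq_comp, ← toLin'_mul, hE.eq]
  rw [← trace_toLin'_eq, (LinearMap.IsIdempotentElem.isProj_range _ hlin).trace]
  rfl

variable (n K) in
noncomputable def centering : Matrix n n K := 1 - (Fintype.card n : K)⁻¹ • of 1

theorem isIdempotentElem_centering : IsIdempotentElem (centering n K) := by
  set c := (Fintype.card n : K)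
  have hc : c⁻¹ * c⁻¹ * c = c⁻¹ := by
    rcases eq_or_ne c 0 with h | h
    · simp [h]
    · field_simp
  rw [IsIdempotentElem, centering, sub_mul, mul_sub, mul_sub, smul_mul_smul_comm,
    of_one_mul_of_one, smul_smul, hc]
  simp only [mul_one, one_mul]
  abel

theorem commute_centering {B : Matrix n n K} (hB : Commute B (of 1)) :
    Commute B (centering n K) :=
  (Commute.one_right B).sub_right (hB.smul_right _)

variable {B : Matrix n n K} {k : K}

theorem mul_centering_apply (hB : B * of 1 = k • of 1) (i j : n) :
    (B * centering n K) i j = B i j - (Fintype.card n : K)⁻¹ * k := by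
  rw [centering, mul_sub, mul_one, mul_smul_comm, hB]
  simp

theorem offDiag_eq_of_mul_centering_eq_smul {y : K} (hBJ : B * of 1 = k • of 1)
    (hBP : B * centering n K = y • centering n K) {i j : n} (hij : i ≠ j) :
    B i j = (Fintype.card n : K)⁻¹ * (k - y) := by
  have := congrFun₂ hBP i j
  rw [mul_centering_apply hBJ] at this
  simp only [centering, Matrix.smul_apply, Matrix.sub_apply, one_apply_ne hij, of_apply,
    Pi.one_apply, smul_eq_mul] at this
  linear_combination this

variable [CharZero K]

section Nonempty

variable [Nonempty n]

theorem of_one_mul_centering : of 1 * centering n K = 0 := by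
  rw [centering, mul_sub, mul_one, mul_smul_comm, of_one_mul_of_one, smul_smul,
    inv_mul_cancel₀ (by simp), one_smul, sub_self]

theorem trace_centering : (centering n K).trace = Fintype.card n - 1 := by
  rw [centering, trace_sub, trace_one, trace_smul]
  simp [trace]

theorem trace_mul_centering (hB : B * of 1 = k • of 1) :
    (B * centering n K).trace = B.trace - k := by
  rw [centering, mul_sub, mul_one, mul_smul_comm, hB, trace_sub, trace_smul, trace_smul]
  simp only [trace, diag_apply, of_apply, Pi.one_apply, sum_const, card_univ, nsmul_eq_mul,
    mul_one, smul_eq_mul, sub_right_inj]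
  field_simp

theorem sub_mul_sub_mul_centering_eq_zero {a b c x y : K}
    (hsq : B * B = a • B + b • 1 + c • of 1) (hx : x ^ 2 = a * x + b) (hy : y ^ 2 = a * y + b)
    (hxy : x ≠ y) :
    (B - algebraMap K _ x) * (B - algebraMap K _ y) * centering n K = 0 := by
  have ha : a = x + y := by
    have : (x - y) * (x + y - a) = 0 := by linear_combination hx - hy
    linear_combination -(mul_eq_zero.1 this).resolve_left (sub_ne_zero.2 hxy)
  have hb : b = -(x * y) := by linear_combination -hx - x * ha
  have : (B - algebraMap K _ x) * (B - algebraMap K _ y) = c • of 1 := by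
    simp only [Algebra.algebraMap_eq_smul_one, sub_mul, mul_sub, mul_smul_comm, smul_mul_assoc,
      mul_one, one_mul, hsq, ha, hb]
    module
  rw [this, smul_mul_assoc, of_one_mul_centering, smul_zero]

end Nonempty

/-- `m` is the rank of the projection onto the `x`-eigenspace of `B` on the orthogonal
complement of the all-ones vector. -/
theorem exists_pos_multiplicity {a b c x y : K} (hBJ : B * of 1 = k • of 1)
    (hJB : of 1 * B = k • of 1) (hsq : B * B = a • B + b • 1 + c • of 1)
    (hx : x ^ 2 = a * x + b) (hy : y ^ 2 = a * y + b) (hxy : x ≠ y)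
    (hB : ¬ ∃ d, ∀ i j, i ≠ j → B i j = d) :
    ∃ m : ℕ, 0 < m ∧ (m : K) * (x - y) = B.trace - k - y * (Fintype.card n - 1) := by
  have : Nonempty n := by
    by_contra h
    exact hB ⟨0, fun i => (not_nonempty_iff.1 h).elim i⟩
  set E := (x - y)⁻¹ • ((B - algebraMap K _ y) * centering n K)
  have hE : IsIdempotentElem E := isIdempotentElem_smul_sub_mul isIdempotentElem_centering
    (commute_centering (hBJ.trans hJB.symm)) hxy
    (sub_mul_sub_mul_centering_eq_zero hsq hx hy hxy)
  refine ⟨E.rank, Nat.pos_of_ne_zero fun h0 => hB ?_, ?_⟩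
  · rw [rank_eq_zero_iff, smul_eq_zero_iff_right (inv_ne_zero (sub_ne_zero.2 hxy)),
      sub_mul, sub_eq_zero, ← Algebra.smul_def] at h0
    exact ⟨_, fun i j hij => offDiag_eq_of_mul_centering_eq_smul hBJ h0 hij⟩
  · rw [← hE.trace_eq_rank, trace_smul, sub_mul, trace_sub, ← Algebra.smul_def, trace_smul,
      trace_mul_centering hBJ, trace_centering, smul_eq_mul, smul_eq_mul]
    field_simp [sub_ne_zero.2 hxy]

end Field

end Matrix

theorem exists_int_eq_of_sq_eq_of_mul_eq {s : ℝ} {d t c : ℤ} (hs : s ^ 2 = d)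
    (hts : t * s = c) (ht : t ≠ 0) : ∃ z : ℤ, s = z := by
  by_contra h
  refine (irrational_nrt_of_notint_nrt 2 d hs h two_pos).ne_rational c t ?_
  rw [← hts]
  field_simp [ht]

theorem Int.even_add_of_sq_eq {a s d : ℤ} (h : s ^ 2 = a ^ 2 + 4 * d) : Even (a + s) := by
  have h4 : Even (4 * d) := ⟨2 * d, by ring⟩
  have : Even (s ^ 2) ↔ Even (a ^ 2) := by
    rw [h, Int.even_add]
    tauto
  rw [Int.even_add]
  simpa [Int.even_pow] using this.symm

section StronglyRegular

variable {n : Type*} [Fintype n] [DecidableEq n] {k lam mu : ℤ} {A : Matrix n n ℤ}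

theorem mu_le_of_srg (hA01 : ∀ i j, A i j = 0 ∨ A i j = 1) (hreg : ∀ i, ∑ j, A i j = k)
    (hsrg : A * A = k • (1 : Matrix n n ℤ) + lam • A
      + mu • (Matrix.of (fun _ _ => (1 : ℤ)) - 1 - A))
    (hnoncomplete : ∃ i j, i ≠ j ∧ A i j = 0) : mu ≤ k := by
  obtain ⟨i, j, hij, h0⟩ := hnoncomplete
  have hmu : (A * A) i j = mu := by
    simp only [hsrg, Matrix.add_apply, Matrix.smul_apply, Matrix.sub_apply, one_apply_ne hij,
      of_apply, h0, smul_eq_mul]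
    ring
  rw [← hmu, mul_apply, ← hreg i]
  refine Finset.sum_le_sum fun l _ => ?_
  rcases hA01 i l with h | h <;> rcases hA01 l j with h' | h' <;> simp [h, h']

theorem map_mul_map_of_srg
    (hsrg : A * A = k • (1 : Matrix n n ℤ) + lam • A
      + mu • (Matrix.of (fun _ _ => (1 : ℤ)) - 1 - A)) :
    A.map (Int.castRingHom ℝ) * A.map (Int.castRingHom ℝ)
      = ((lam - mu : ℤ) : ℝ) • A.map (Int.castRingHom ℝ) + ((k - mu : ℤ) : ℝ) • 1
        + (mu : ℝ) • of 1 := by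
  rw [← Matrix.map_mul, hsrg]
  ext i j
  simp only [map_apply, Matrix.add_apply, Matrix.smul_apply, Matrix.sub_apply, one_apply,
    of_apply, Pi.one_apply, smul_eq_mul, Int.coe_castRingHom]
  split_ifs <;> push_cast <;> ring

theorem exists_multiplicities_of_srg (hAsymm : A.IsSymm) (hAdiag : ∀ i, A i i = 0)
    (hreg : ∀ i, ∑ j, A i j = k)
    (hsrg : A * A = k • (1 : Matrix n n ℤ) + lam • A
      + mu • (Matrix.of (fun _ _ => (1 : ℤ)) - 1 - A))
    (hnoncomplete : ∃ i j, i ≠ j ∧ A i j = 0) (hnonempty : ∃ i j, A i j = 1)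
    {s : ℝ} (hs : s ^ 2 = (lam - mu) ^ 2 + 4 * (k - mu)) (hs0 : s ≠ 0) :
    ∃ m₂ m₃ : ℕ, 0 < m₂ ∧ 0 < m₃ ∧
      2 * m₂ * s = (Fintype.card n - 1) * s - (2 * k + (Fintype.card n - 1) * (lam - mu)) ∧
      2 * m₃ * s = (Fintype.card n - 1) * s + (2 * k + (Fintype.card n - 1) * (lam - mu)) := by
  set B := A.map (Int.castRingHom ℝ)
  have hBJ : B * of 1 = (k : ℝ) • of 1 := mul_of_one_eq_smul fun i => by simp [B, ← hreg i]
  have hJB : of 1 * B = (k : ℝ) • of 1 :=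
    of_one_mul_eq_smul fun j => by simp [B, ← hreg j, ← hAsymm.apply]
  have htr : B.trace = 0 := by simp [trace, B, hAdiag]
  have hoff : ¬ ∃ d, ∀ i j, i ≠ j → B i j = d := by
    obtain ⟨i₀, j₀, h₀⟩ := hnonempty
    obtain ⟨i₁, j₁, hij₁, h₁⟩ := hnoncomplete
    have hij₀ : i₀ ≠ j₀ := by rintro rfl; simp [hAdiag] at h₀
    rintro ⟨d, hd⟩
    simpa [B, h₀, h₁] using (hd i₀ j₀ hij₀).trans (hd i₁ j₁ hij₁).symm
  have hroot : ∀ t : ℝ, t ^ 2 = s ^ 2 → ((lam - mu + t) / 2) ^ 2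
      = ((lam - mu : ℤ) : ℝ) * ((lam - mu + t) / 2) + ((k - mu : ℤ) : ℝ) := by
    intro t ht
    push_cast
    linear_combination ht / 4 + hs / 4
  have hne : (lam - mu + s) / 2 ≠ (lam - mu + -s) / 2 := by
    intro h; apply hs0; linarith
  obtain ⟨m₂, hm₂, h₂⟩ := exists_pos_multiplicity hBJ hJB (map_mul_map_of_srg hsrg)
    (hroot s rfl) (hroot (-s) (neg_sq s)) hne hoff
  obtain ⟨m₃, hm₃, h₃⟩ := exists_pos_multiplicity hBJ hJB (map_mul_map_of_srg hsrg)
    (hroot (-s) (neg_sq s)) (hroot s rfl) hne.symm hoff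
  rw [htr] at h₂ h₃
  exact ⟨m₂, m₃, hm₂, hm₃, by linear_combination 2 * h₂, by linear_combination -2 * h₃⟩

end StronglyRegular

/-- For a (non-complete, non-empty) strongly regular graph with `λ ≠ μ` and
`2k + (v-1)(λ-μ) ≠ 0`, the multiplicities `m₂, m₃` are positive integers, `Δ` is a
perfect square, and the eigenvalues `ν₂, ν₃` are integers. -/
theorem stmt12 (v : ℕ) (k lam mu : ℤ) (A : Matrix (Fin v) (Fin v) ℤ)
    (hA01 : ∀ i j, A i j = 0 ∨ A i j = 1)
    (hAsymm : A.IsSymm)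
    (hAdiag : ∀ i, A i i = 0)
    (hreg : ∀ i, ∑ j, A i j = k)
    (hsrg : A * A = k • (1 : Matrix (Fin v) (Fin v) ℤ) + lam • A
      + mu • (Matrix.of (fun _ _ => (1 : ℤ)) - 1 - A))
    (hnoncomplete : ∃ i j, i ≠ j ∧ A i j = 0)
    (hnonempty : ∃ i j, A i j = 1)
    (hlm : lam ≠ mu)
    (hne : 2 * k + ((v : ℤ) - 1) * (lam - mu) ≠ 0) :
    ∃ s : ℤ, 0 < s ∧ s ^ 2 = (lam - mu) ^ 2 + 4 * (k - mu) ∧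
      ∃ m₂ m₃ : ℤ, 0 < m₂ ∧ 0 < m₃ ∧
        2 * m₂ * s = ((v : ℤ) - 1) * s - (2 * k + ((v : ℤ) - 1) * (lam - mu)) ∧
        2 * m₃ * s = ((v : ℤ) - 1) * s + (2 * k + ((v : ℤ) - 1) * (lam - mu)) ∧
        ∃ ν₂ ν₃ : ℤ, 2 * ν₂ = lam - mu + s ∧ 2 * ν₃ = lam - mu - s := by
  have hΔ : 0 < (lam - mu) ^ 2 + 4 * (k - mu) := by
    have := mu_le_of_srg hA01 hreg hsrg hnoncomplete
    nlinarith [sq_pos_of_ne_zero (sub_ne_zero.2 hlm)]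
  have hΔR : (0 : ℝ) < (lam - mu) ^ 2 + 4 * (k - mu) := by exact_mod_cast hΔ
  have hs := Real.sq_sqrt hΔR.le
  have hspos := Real.sqrt_pos.2 hΔR
  obtain ⟨m₂, m₃, hm₂, hm₃, h₂, h₃⟩ := exists_multiplicities_of_srg hAsymm hAdiag hreg hsrg
    hnoncomplete hnonempty hs hspos.ne'
  rw [Fintype.card_fin] at h₂ h₃
  have hts : (((v : ℤ) - 1 - 2 * m₂ : ℤ) : ℝ) * √((lam - mu) ^ 2 + 4 * (k - mu))
      = ((2 * k + ((v : ℤ) - 1) * (lam - mu) : ℤ) : ℝ) := by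
    push_cast; linarith
  obtain ⟨s, hsz⟩ := exists_int_eq_of_sq_eq_of_mul_eq (d := (lam - mu) ^ 2 + 4 * (k - mu))
    (by exact_mod_cast hs) hts fun ht => hne <| by
      rw [ht, Int.cast_zero, zero_mul] at hts
      exact_mod_cast hts.symm
  rw [hsz] at hs h₂ h₃ hspos
  have hs' : s ^ 2 = (lam - mu) ^ 2 + 4 * (k - mu) := by exact_mod_cast hs
  obtain ⟨ν, hν⟩ := Int.even_add_of_sq_eq hs'
  exact ⟨s, by exact_mod_cast hspos, hs', m₂, m₃, by exact_mod_cast hm₂, by exact_mod_cast hm₃,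
    by exact_mod_cast h₂, by exact_mod_cast h₃, ν, ν - s, by linarith, by linarith⟩
end

section
/- If D is a regular (100, 36, 14, 12) partial difference set in an abelian group G of order 100 closed under d ↦ s·d for all s coprime to 100, then D contains no element whose order is a power of 2. Concretely: G of order 100 has at most 3 elements of order a power of 2 (orders 2 or 4); the elements of D of order divisible by 5 lie in orbits of size divisible by 4 under unit multiplication; since |D| = 36 ≡ 0 (mod 4), the number of elements of D of 2-power order is ≡ 0 (mod 4) and at most 3, hence is 0. -/
/-!
Multiplication by `7` preserves `D`, since `7` is a unit modulo `100`. On an element whose order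
is divisible by `5` it has period exactly `4`: `7 ^ 4 ≡ 1 [MOD 100]`, while `7 ^ 2 - 1 = 48` is
prime to `5`. So the elements of `D` of order divisible by `5` come in orbits of size `4`. Every
other element of `D` lies in the `4`-torsion subgroup, whose order divides `4` by Cauchy's
theorem and which contains `0 ∉ D`; so at most `3` of them remain, and `|D| = 36 ≡ 0 [MOD 4]`
forces there to be none.
-/

open Finset Function Equiv MulAction Subgroup

namespace Equiv.Perm

variable {α : Type*}

theorem dvd_natCard_of_forall_minimalPeriod_eq [Finite α] (σ : Perm α) {n : ℕ}
    (h : ∀ x, minimalPeriod σ x = n) : n ∣ Nat.card α := by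
  have := Fintype.ofFinite (orbitRel.Quotient (zpowers σ) α)
  rw [Nat.card_congr ((selfEquivSigmaOrbits (zpowers σ) α).trans
    (Equiv.sigmaCongrRight fun q => orbitZPowersEquiv σ q.out)), Nat.card_sigma]
  exact Finset.dvd_sum fun q _ => by rw [Nat.card_zmod]; exact (h q.out).symm ▸ dvd_rfl

theorem minimalPeriod_subtypePerm {p : α → Prop} (σ : Perm α) (h : ∀ x, p (σ x) ↔ p x)
    (x : Subtype p) : minimalPeriod (σ.subtypePerm h) x = minimalPeriod σ x := by
  refine minimalPeriod_eq_minimalPeriod_iff.mpr fun k => ?_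
  simp only [IsPeriodicPt, IsFixedPt, ← coe_pow, subtypePerm_pow, subtypePerm_apply,
    Subtype.ext_iff]

theorem dvd_card_of_forall_mem_minimalPeriod_eq (σ : Perm α) {s : Finset α}
    (hs : ∀ x, σ x ∈ s ↔ x ∈ s) {n : ℕ} (h : ∀ x ∈ s, minimalPeriod σ x = n) : n ∣ #s := by
  rw [← Nat.card_eq_finsetCard]
  exact dvd_natCard_of_forall_minimalPeriod_eq (σ.subtypePerm hs) fun x =>
    (minimalPeriod_subtypePerm σ hs x).trans (h x x.2)

end Equiv.Perm

theorem Nat.dvd_four_of_dvd_hundred {m : ℕ} (h : m ∣ 100) (h5 : ¬ 5 ∣ m) : m ∣ 4 :=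
  (Nat.Coprime.pow_left 2 ((Nat.Prime.coprime_iff_not_dvd Nat.prime_five).2 h5)).symm
    |>.dvd_of_dvd_mul_right h

section AddCommGroup

variable {G : Type*} [AddCommGroup G]

theorem succ_nsmul_eq_self_iff {x : G} {k : ℕ} : (k + 1) • x = x ↔ addOrderOf x ∣ k := by
  rw [succ_nsmul, add_eq_right, addOrderOf_dvd_iff_nsmul_eq_zero]

theorem minimalPeriod_seven_nsmul_eq_four {x : G} (h100 : addOrderOf x ∣ 100)
    (h5 : 5 ∣ addOrderOf x) : minimalPeriod (fun y => 7 • y) x = 4 := by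
  refine minimalPeriod_eq_prime_pow (p := 2) (k := 1) ?_ ?_
  · rw [isPeriodicPt_smul_iff, show 7 ^ 2 ^ 1 = 48 + 1 by norm_num, succ_nsmul_eq_self_iff]
    exact fun h48 => absurd (h5.trans h48) (by norm_num)
  · rw [isPeriodicPt_smul_iff, show 7 ^ 2 ^ (1 + 1) = 2400 + 1 by norm_num,
      succ_nsmul_eq_self_iff]
    exact h100.trans (by norm_num)

def nsmulPerm (k l : ℕ) (h : ∀ x : G, (k * l) • x = x) : Perm G where
  toFun x := k • x
  invFun x := l • x
  left_inv x := by simp only [smul_smul, mul_comm l, h]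
  right_inv x := by simp only [smul_smul, h]

theorem four_dvd_card_filter_five_dvd_addOrderOf [Finite G] (hG : Nat.card G ∣ 100)
    {D : Finset G} (hD : ∀ k : ℕ, k.Coprime 100 → ∀ x ∈ D, k • x ∈ D) :
    4 ∣ #(D.filter (5 ∣ addOrderOf ·)) := by
  have hord (x : G) : addOrderOf x ∣ 100 := (addOrderOf_dvd_natCard x).trans hG
  let σ : Perm G := nsmulPerm 7 343 fun x => by
    rw [show 7 * 343 = 2400 + 1 by norm_num, succ_nsmul_eq_self_iff]
    exact (hord x).trans (by norm_num)
  refine σ.dvd_card_of_forall_mem_minimalPeriod_eq (fun x => ?_)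
    fun x hx => minimalPeriod_seven_nsmul_eq_four (hord x) (mem_filter.mp hx).2
  have hσD : σ x ∈ D ↔ x ∈ D :=
    ⟨fun h => σ.symm_apply_apply x ▸ hD 343 (by norm_num) _ h, hD 7 (by norm_num) x⟩
  have hσord : addOrderOf (σ x) = addOrderOf x :=
    (Nat.Coprime.coprime_dvd_left (hord x) (by norm_num)).addOrderOf_nsmul
  simp only [mem_filter, hσD, hσord]

theorem AddSubgroup.not_dvd_natCard_torsionBy [Finite G] {p n : ℕ} [Fact p.Prime]
    (hpn : ¬ p ∣ n) : ¬ p ∣ Nat.card (AddSubgroup.torsionBy G n) := fun hp => by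
  obtain ⟨x, hx⟩ := exists_prime_addOrderOf_dvd_card' p hp
  have hxn : addOrderOf (x : G) ∣ n :=
    addOrderOf_dvd_of_nsmul_eq_zero (AddSubgroup.torsionBy.nsmul_iff.mp x.2)
  rw [AddSubgroup.addOrderOf_coe, hx] at hxn
  exact hpn hxn

theorem AddSubgroup.natCard_torsionBy_four_dvd [Finite G] (hG : Nat.card G ∣ 100) :
    Nat.card (AddSubgroup.torsionBy G 4) ∣ 4 := by
  have : Fact (Nat.Prime 5) := ⟨Nat.prime_five⟩
  exact Nat.dvd_four_of_dvd_hundred ((AddSubgroup.card_addSubgroup_dvd_card _).trans hG)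
    (not_dvd_natCard_torsionBy (by norm_num))

theorem card_filter_not_five_dvd_addOrderOf_lt_four [Finite G] (hG : Nat.card G ∣ 100)
    {D : Finset G} (h0 : (0 : G) ∉ D) : #(D.filter (¬ 5 ∣ addOrderOf ·)) < 4 := by
  set T := D.filter (¬ 5 ∣ addOrderOf ·)
  have hT : (T : Set G) ⊂ AddSubgroup.torsionBy G 4 := by
    refine (Set.ssubset_iff_of_subset fun x hx => ?_).mpr
      ⟨0, zero_mem _, fun h => h0 (mem_filter.mp h).1⟩
    have h4 := Nat.dvd_four_of_dvd_hundred ((addOrderOf_dvd_natCard x).trans hG)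
      (mem_filter.mp hx).2
    exact AddSubgroup.torsionBy.nsmul_iff.mpr (addOrderOf_dvd_iff_nsmul_eq_zero.mp h4)
  calc #T = (T : Set G).ncard := (Set.ncard_coe_finset T).symm
    _ < Nat.card (AddSubgroup.torsionBy G 4) := Set.ncard_lt_ncard hT (Set.toFinite _)
    _ ≤ 4 := Nat.le_of_dvd (by norm_num) (AddSubgroup.natCard_torsionBy_four_dvd hG)

end AddCommGroup

theorem stmt19_general (G : Type*) [AddCommGroup G] [Fintype G]
    (hG : Fintype.card G = 100)
    (D : Finset G) (hcard : D.card = 36)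
    (h0 : (0 : G) ∉ D)
    (hclosed : ∀ s : ℤ, IsCoprime s 100 → ∀ d ∈ D, s • d ∈ D) :
    ∀ d ∈ D, ∀ j : ℕ, addOrderOf d ≠ 2 ^ j := by
  intro d hd j hj
  have hG100 : Nat.card G ∣ 100 := (Nat.card_eq_fintype_card.trans hG).dvd
  have hS : 4 ∣ #(D.filter (5 ∣ addOrderOf ·)) :=
    four_dvd_card_filter_five_dvd_addOrderOf hG100 fun k hk x hx => by
      simpa only [natCast_zsmul] using hclosed k (Int.isCoprime_iff_gcd_eq_one.mpr hk) x hx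
  have hT := card_filter_not_five_dvd_addOrderOf_lt_four hG100 h0
  have hsplit : #(D.filter (5 ∣ addOrderOf ·)) + #(D.filter (¬ 5 ∣ addOrderOf ·)) = 36 :=
    hcard ▸ card_filter_add_card_filter_not _
  have hdT : d ∈ D.filter (¬ 5 ∣ addOrderOf ·) :=
    mem_filter.mpr ⟨hd, fun h5 => absurd (Nat.prime_five.dvd_of_dvd_pow (hj ▸ h5)) (by norm_num)⟩
  have := card_pos.mpr ⟨d, hdT⟩
  omega

/-- A regular `(100,36,14,12)` partial difference set in an abelian group of order 100
that is closed under `d ↦ s·d` for all `s` coprime to 100 contains no element of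
2-power order. -/
theorem stmt19 (G : Type*) [AddCommGroup G] [Fintype G] [DecidableEq G]
    (hG : Fintype.card G = 100)
    (D : Finset G) (hcard : D.card = 36)
    (h0 : (0 : G) ∉ D) (hinv : ∀ d, d ∈ D ↔ -d ∈ D)
    (hlam : ∀ g ∈ D, ((D ×ˢ D).filter fun p => p.1 - p.2 = g).card = 14)
    (hmu : ∀ g : G, g ≠ 0 → g ∉ D →
      ((D ×ˢ D).filter fun p => p.1 - p.2 = g).card = 12)
    (hclosed : ∀ s : ℤ, IsCoprime s 100 → ∀ d ∈ D, s • d ∈ D) :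
    ∀ d ∈ D, ∀ j : ℕ, addOrderOf d ≠ 2 ^ j :=
  stmt19_general G hG D hcard h0 hclosed
end
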